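/- arXiv:1810.09921 — 4 statements merged into one kernel-verified Lean document; each statement's English description precedes it below -/
import Mathlib

section
/- Fix an integer r ≥ 2 and a probability distribution μ = (μ_1, …, μ_r) with μ_i > 0 for all i, and set μ̃ = Σ_{i=1}^{r−1} μ_i = 1 − μ_r. For every n ≥ 2 and every admissible vector (K_1, …, K_r) with K_1 = 1 and K_r large enough that K_r ≥ ⌈4·((1/2)^{K_r−1}/μ̃) + 1⌉, the probability of connectivity satisfies P(n; μ, K) ≥ 1 − (μ̃²/(1 − μ̃)) · Ψ(n, μ, K), where Ψ(n, μ, K) = max{ exp(−2(1−μ̃)((K_r−1)/4 − (1/2)^{K_r−1}/μ̃)), exp(−(1−μ̃)(n/2)(1 − e^{−1} − (1/2)^{K_r−1}/μ̃)) }. -/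
open Finset Filter

noncomputable section

/-- A configuration assigns to each vertex a class in `Fin r` and a selection set. -/
abbrev Config (n r : ℕ) := Fin n → Fin r × Finset (Fin n)

/-- Probability weight of a configuration: each vertex `v` independently has class `i`
with probability `μ i`, and given class `i`, its selection set is a uniformly random
`K i`-subset of the other vertices. -/
noncomputable def wt {r : ℕ} (n : ℕ) (μ : Fin r → ℝ) (K : Fin r → ℕ)
    (ω : Config n r) : ℝ :=
  ∏ v : Fin n,
    if (ω v).2.card = K (ω v).1 ∧ v ∉ (ω v).2 then
      μ (ω v).1 / ((n - 1).choose (K (ω v).1) : ℝ)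
    else 0

/-- Probability of an event in the inhomogeneous random K-out graph model. -/
noncomputable def Pr {r : ℕ} (n : ℕ) (μ : Fin r → ℝ) (K : Fin r → ℕ)
    (E : Set (Config n r)) : ℝ :=
  ∑ ω : Config n r, E.indicator (wt n μ K) ω

/-- Expectation of a real-valued random variable in the model. -/
noncomputable def Ex {r : ℕ} (n : ℕ) (μ : Fin r → ℝ) (K : Fin r → ℕ)
    (f : Config n r → ℝ) : ℝ :=
  ∑ ω : Config n r, f ω * wt n μ K ω

/-- The undirected graph induced by a configuration: `u ~ v` iff at least one of
them selected the other. -/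
def graphOf {n r : ℕ} (ω : Config n r) : SimpleGraph (Fin n) where
  Adj u v := u ≠ v ∧ (u ∈ (ω v).2 ∨ v ∈ (ω u).2)
  symm := ⟨fun _ _ h => ⟨h.1.symm, h.2.symm⟩⟩
  loopless := ⟨fun _ h => h.1 rfl⟩

/-- Probability that the inhomogeneous random K-out graph is connected. -/
noncomputable def Pconn {r : ℕ} (n : ℕ) (μ : Fin r → ℝ) (K : Fin r → ℕ) : ℝ :=
  Pr n μ K {ω | (graphOf ω).Connected}

/-- The event `U_{ij}`: vertices `i` and `j` both have class `c`, each selected exactly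
the other, and no other vertex selected either of them. -/
def Uevent {n r : ℕ} (c : Fin r) (i j : Fin n) : Set (Config n r) :=
  {ω | (ω i).1 = c ∧ (ω j).1 = c ∧ (ω i).2 = {j} ∧ (ω j).2 = {i} ∧
    ∀ l : Fin n, l ≠ i → l ≠ j → i ∉ (ω l).2 ∧ j ∉ (ω l).2}

/-- `Y`: the number of isolated components consisting of two class-`c` vertices. -/
noncomputable def Ycount {n r : ℕ} (c : Fin r) (ω : Config n r) : ℝ :=
  ∑ p : Fin n × Fin n,
    if p.1 < p.2 then (Uevent c p.1 p.2).indicator (fun _ => (1 : ℝ)) ω else 0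

/-- The event `B_{n,ℓ}`: the set of vertices with index `< ℓ` is isolated, i.e. there is
no edge between it and its complement. -/
def Bevent (n r : ℕ) (l : ℕ) : Set (Config n r) :=
  {ω | ∀ u v : Fin n, (u : ℕ) < l → ¬ (v : ℕ) < l → u ∉ (ω v).2 ∧ v ∉ (ω u).2}


/-!
If the graph is disconnected, the component of some vertex or its complement is a set `S` with
`2 ≤ |S| ≤ n/2` across which nobody selects (a nonempty such set has two elements, since every
vertex selects some other vertex). For fixed `S` this event has probability `a^|S| b^(n-|S|)`,
where `a` (resp. `b`) is the probability that a vertex selects only inside `S` (resp. outside).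
From `C(m,k)/C(n-1,k) ≤ (m/(n-1))^k`, separating class `r` from the others, with
`z = (ℓ-1)/(n-1)`, `y = (n-1-ℓ)/(n-1)` and `x = 2^(1-K_r)/μ̃` one gets `a ≤ μ̃ z (1 + μ_r x)` and
`b ≤ y (1 - μ_r (1 - y^(K_r-1))) ≤ y exp(-μ_r (1 - e^(-ℓ(K_r-1)/(n-1))))`. As
`C(n,ℓ) z^ℓ y^(n-ℓ) ≤ (z+y)^n ≤ 1`, the sets of size `ℓ` contribute at most `μ̃^ℓ Ψ`: the two
terms of `Ψ` correspond to `ℓ(K_r-1) ≤ n-1` (convexity of `exp`) and `ℓ(K_r-1) ≥ n-1`.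
Summing the geometric series over `ℓ ≥ 2` gives the factor `μ̃²/(1-μ̃)`.
-/
theorem Nat.choose_mul_pow_le_choose_mul_pow {m N : ℕ} (h : m ≤ N) (k : ℕ) :
    m.choose k * N ^ k ≤ N.choose k * m ^ k := by
  induction k with
  | zero => simp
  | succ k ih =>
    have hstep : (m - k) * N ≤ (N - k) * m := by
      rw [Nat.sub_mul, Nat.sub_mul, mul_comm N m]
      exact Nat.sub_le_sub_left (Nat.mul_le_mul_left k h) _
    refine Nat.le_of_mul_le_mul_left ?_ (Nat.succ_pos k)
    calc (k + 1) * (m.choose (k + 1) * N ^ (k + 1))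
        = m.choose (k + 1) * (k + 1) * N ^ k * N := by ring
      _ = m.choose k * N ^ k * ((m - k) * N) := by rw [Nat.choose_succ_right_eq]; ring
      _ ≤ N.choose k * m ^ k * ((N - k) * m) := Nat.mul_le_mul ih hstep
      _ = N.choose (k + 1) * (k + 1) * m ^ k * m := by rw [Nat.choose_succ_right_eq]; ring
      _ = (k + 1) * (N.choose (k + 1) * m ^ (k + 1)) := by ring

theorem choose_div_choose_le_pow {m N : ℕ} (h : m ≤ N) (k : ℕ) :
    (m.choose k : ℝ) / N.choose k ≤ ((m : ℝ) / N) ^ k := by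
  rcases Nat.eq_zero_or_pos (N.choose k) with hN | hN
  · rw [hN, Nat.cast_zero, div_zero]
    positivity
  have hkN : k ≤ N := not_lt.1 (Nat.choose_eq_zero_iff.not.1 hN.ne')
  rcases Nat.eq_zero_or_pos N with rfl | hN0
  · obtain rfl : k = 0 := by omega
    simp
  rw [div_pow, div_le_div_iff₀ (by exact_mod_cast hN) (by positivity), mul_comm _ (N.choose k : ℝ)]
  exact_mod_cast Nat.choose_mul_pow_le_choose_mul_pow h k

theorem choose_mul_pow_mul_pow_le_one {z y : ℝ} (hz : 0 ≤ z) (hy : 0 ≤ y) (hzy : z + y ≤ 1)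
    (n l : ℕ) : n.choose l * z ^ l * y ^ (n - l) ≤ 1 := by
  rcases le_or_gt l n with hl | hl
  · calc n.choose l * z ^ l * y ^ (n - l) = z ^ l * y ^ (n - l) * n.choose l := by ring
      _ ≤ ∑ k ∈ range (n + 1), z ^ k * y ^ (n - k) * n.choose k :=
          single_le_sum (f := fun k => z ^ k * y ^ (n - k) * (n.choose k : ℝ))
            (fun k _ => by positivity) (mem_range.2 (by omega))
      _ = (z + y) ^ n := (add_pow z y n).symm
      _ ≤ 1 := pow_le_one₀ (by positivity) hzy
  · simp [Nat.choose_eq_zero_of_lt hl]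

theorem mul_one_sub_exp_neg_one_le {s : ℝ} (hs0 : 0 ≤ s) (hs1 : s ≤ 1) :
    s * (1 - Real.exp (-1)) ≤ 1 - Real.exp (-s) := by
  have h := convexOn_exp.2 (Set.mem_univ (-1)) (Set.mem_univ 0) hs0 (sub_nonneg.2 hs1)
    (by ring)
  simp only [smul_eq_mul, mul_neg, mul_one, mul_zero, add_zero, Real.exp_zero] at h
  linarith

theorem one_sub_pow_le_exp_neg_mul {t : ℝ} (ht : 0 ≤ 1 - t) (k : ℕ) :
    (1 - t) ^ k ≤ Real.exp (-(k * t)) := by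
  rw [neg_mul_eq_mul_neg, Real.exp_nat_mul]
  exact pow_le_pow_left₀ ht (Real.one_sub_le_exp_neg t) k

section Model

variable {n r : ℕ} (μ : Fin r → ℝ) (K : Fin r → ℕ)

def vertexWt (v : Fin n) (p : Fin r × Finset (Fin n)) : ℝ :=
  if p.2.card = K p.1 ∧ v ∉ p.2 then μ p.1 / ((n - 1).choose (K p.1) : ℝ) else 0

/-- The probability that the selection set of a vertex lies inside a given set of `m` vertices
other than itself. -/
def probSelectWithin (n : ℕ) (m : ℕ) : ℝ :=
  ∑ c, μ c * ((m.choose (K c) : ℝ) / (n - 1).choose (K c))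

def isolatedEvent (S : Finset (Fin n)) : Set (Config n r) :=
  {ω | ∀ v, ∀ u ∈ (ω v).2, u ∈ S ↔ v ∈ S}

theorem wt_eq_prod (ω : Config n r) : wt n μ K ω = ∏ v, vertexWt μ K v (ω v) := rfl

variable {μ} in
theorem wt_nonneg (hμ : ∀ i, 0 ≤ μ i) (ω : Config n r) : 0 ≤ wt n μ K ω :=
  prod_nonneg fun v _ => by
    split_ifs
    exacts [div_nonneg (hμ _) (Nat.cast_nonneg _), le_rfl]

variable {μ} in
theorem probSelectWithin_nonneg (hμ : ∀ i, 0 ≤ μ i) (n m : ℕ) : 0 ≤ probSelectWithin μ K n m :=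
  sum_nonneg fun c _ => mul_nonneg (hμ c) (by positivity)

theorem card_eq_and_notMem_of_wt_ne_zero {ω : Config n r} (h : wt n μ K ω ≠ 0) (v : Fin n) :
    (ω v).2.card = K (ω v).1 ∧ v ∉ (ω v).2 := by
  rw [wt_eq_prod, prod_ne_zero_iff] at h
  by_contra hv
  exact h v (mem_univ v) (if_neg hv)

theorem sum_ite_forall_mem_vertexWt (Q : Fin n → Prop) [DecidablePred Q] (v : Fin n) :
    ∑ p, (if ∀ u ∈ p.2, Q u then vertexWt μ K v p else 0)
      = probSelectWithin μ K n #{u | u ≠ v ∧ Q u} := by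
  rw [Fintype.sum_prod_type]
  refine sum_congr rfl fun c _ => ?_
  set D : Finset (Fin n) := {u | u ≠ v ∧ Q u}
  have hterm : ∀ T : Finset (Fin n), (if ∀ u ∈ T, Q u then vertexWt μ K v (c, T) else 0)
      = if T ∈ D.powersetCard (K c) then μ c / ((n - 1).choose (K c) : ℝ) else 0 := by
    intro T
    simp only [vertexWt, mem_powersetCard, subset_iff, D, mem_filter, mem_univ, true_and]
    split_ifs <;> grind
  rw [sum_congr rfl fun T _ => hterm T, sum_ite_mem, univ_inter, sum_const, card_powersetCard,
    nsmul_eq_mul]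
  ring

theorem Pr_setOf_forall (P : Fin n → Fin r × Finset (Fin n) → Prop) [∀ v, DecidablePred (P v)] :
    Pr n μ K {ω | ∀ v, P v (ω v)} = ∏ v, ∑ p, if P v p then vertexWt μ K v p else 0 := by
  rw [Fintype.prod_sum]
  refine sum_congr rfl fun ω _ => ?_
  by_cases h : ω ∈ {ω : Config n r | ∀ v, P v (ω v)}
  · rw [Set.indicator_of_mem h, wt_eq_prod]
    exact prod_congr rfl fun v _ => (if_pos (h v)).symm
  · obtain ⟨v, hv⟩ := not_forall.1 h
    rw [Set.indicator_of_notMem h, prod_eq_zero (mem_univ v) (if_neg hv)]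

theorem sum_wt (hsum : ∑ i, μ i = 1) (hlt : ∀ i, K i < n) : ∑ ω, wt n μ K ω = 1 := by
  have hvertex : ∀ v : Fin n, ∑ p, vertexWt μ K v p = 1 := by
    intro v
    have h := sum_ite_forall_mem_vertexWt μ K (fun _ => True) v
    simp only [implies_true, if_true, and_true] at h
    rw [h, filter_ne', card_erase_of_mem (mem_univ v), card_univ, Fintype.card_fin, ← hsum]
    refine sum_congr rfl fun c _ => ?_
    have : ((n - 1).choose (K c) : ℝ) ≠ 0 := by
      exact_mod_cast (Nat.choose_pos (by have := hlt c; omega)).ne'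
    rw [div_self this, mul_one]
  simp only [wt_eq_prod, ← Fintype.prod_sum, hvertex, prod_const_one]

theorem Pr_isolatedEvent (S : Finset (Fin n)) :
    Pr n μ K (isolatedEvent S)
      = probSelectWithin μ K n (#S - 1) ^ #S * probSelectWithin μ K n (n - #S - 1) ^ (n - #S) := by
  refine (Pr_setOf_forall μ K fun v p => ∀ u ∈ p.2, u ∈ S ↔ v ∈ S).trans ?_
  have hside : ∀ v : Fin n, #{u | u ≠ v ∧ (u ∈ S ↔ v ∈ S)}
      = if v ∈ S then #S - 1 else n - #S - 1 := by
    intro v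
    split_ifs with hv
    · rw [← card_erase_of_mem hv]
      congr 1; ext u; simp [hv]
    · rw [show n - #S = #Sᶜ by rw [card_compl, Fintype.card_fin],
        ← card_erase_of_mem (mem_compl.2 hv)]
      congr 1; ext u; simp [hv]
  simp only [sum_ite_forall_mem_vertexWt, hside, apply_ite (probSelectWithin μ K n), prod_ite,
    prod_const, filter_mem_eq_inter, univ_inter, filter_not, card_sdiff, inter_univ, card_univ,
    Fintype.card_fin]

theorem Pr_add_Pr_compl (E : Set (Config n r)) :
    Pr n μ K E + Pr n μ K Eᶜ = ∑ ω, wt n μ K ω := by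
  simp only [Pr, ← sum_add_distrib, Set.indicator_self_add_compl_apply]

variable {μ} in
theorem Pr_le_sum_Pr {ι : Type*} (hμ : ∀ i, 0 ≤ μ i) (s : Finset ι) (A : ι → Set (Config n r))
    {E : Set (Config n r)} (hE : ∀ ω ∈ E, wt n μ K ω ≠ 0 → ∃ i ∈ s, ω ∈ A i) :
    Pr n μ K E ≤ ∑ i ∈ s, Pr n μ K (A i) := by
  simp only [Pr]
  rw [sum_comm]
  refine sum_le_sum fun ω _ => ?_
  have hnonneg : ∀ i ∈ s, 0 ≤ (A i).indicator (wt n μ K) ω :=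
    fun i _ => Set.indicator_nonneg (fun ω _ => wt_nonneg K hμ ω) ω
  by_cases h : ω ∈ E ∧ wt n μ K ω ≠ 0
  · obtain ⟨i, hi, hω⟩ := hE ω h.1 h.2
    rw [Set.indicator_of_mem h.1, ← Set.indicator_of_mem hω (wt n μ K)]
    exact single_le_sum hnonneg hi
  · rw [not_and, not_not] at h
    rw [Set.indicator_apply_eq_zero.2 h]
    exact sum_nonneg hnonneg

end Model

section Connectivity

variable {n r : ℕ}

theorem isolatedEvent_compl (S : Finset (Fin n)) :
    isolatedEvent (r := r) Sᶜ = isolatedEvent S := by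
  ext ω
  simp only [isolatedEvent, mem_compl, not_iff_not]

open Classical in
theorem mem_isolatedEvent_reachable (ω : Config n r) (u₀ : Fin n) :
    ω ∈ isolatedEvent {w | (graphOf ω).Reachable u₀ w} := by
  intro v u hu
  simp only [mem_filter, mem_univ, true_and]
  rcases eq_or_ne u v with rfl | huv
  · rfl
  have hadj : (graphOf ω).Adj v u := ⟨huv.symm, Or.inr hu⟩
  exact ⟨fun h => h.trans hadj.symm.reachable, fun h => h.trans hadj.reachable⟩

theorem two_le_card_of_mem_isolatedEvent {ω : Config n r} (hsel : ∀ v, ∃ u ∈ (ω v).2, u ≠ v)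
    {S : Finset (Fin n)} (hω : ω ∈ isolatedEvent S) {v : Fin n} (hv : v ∈ S) : 2 ≤ #S := by
  obtain ⟨u, hu, huv⟩ := hsel v
  exact one_lt_card.2 ⟨u, (hω v u hu).2 hv, v, hv, huv⟩

theorem exists_isolatedEvent_of_not_connected (hn : 0 < n) {ω : Config n r}
    (hsel : ∀ v, ∃ u ∈ (ω v).2, u ≠ v) (hω : ¬ (graphOf ω).Connected) :
    ∃ S : Finset (Fin n), 2 ≤ #S ∧ 2 * #S ≤ n ∧ ω ∈ isolatedEvent S := by
  classical
  have : Nonempty (Fin n) := ⟨⟨0, hn⟩⟩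
  obtain ⟨u₀, v₀, hu₀v₀⟩ : ∃ u v, ¬ (graphOf ω).Reachable u v := by
    simpa [SimpleGraph.connected_iff, SimpleGraph.Preconnected] using hω
  set C : Finset (Fin n) := {w | (graphOf ω).Reachable u₀ w}
  have hC : ω ∈ isolatedEvent C := mem_isolatedEvent_reachable ω u₀
  have hCc : ω ∈ isolatedEvent Cᶜ := by rwa [isolatedEvent_compl]
  have hCcard : 2 ≤ #C := two_le_card_of_mem_isolatedEvent hsel hC (v := u₀) (by simp [C])
  have hCccard : 2 ≤ #Cᶜ := two_le_card_of_mem_isolatedEvent hsel hCc (v := v₀) (by simpa [C])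
  have hsplit : #Cᶜ = n - #C := by rw [card_compl, Fintype.card_fin]
  rcases le_total (2 * #C) n with hle | hle
  · exact ⟨C, hCcard, hle, hC⟩
  · exact ⟨Cᶜ, hCccard, by omega, hCc⟩

variable {μ : Fin r → ℝ} {K : Fin r → ℕ}

theorem Pr_not_connected_le (hμ : ∀ i, 0 ≤ μ i) (hone : ∀ i, 1 ≤ K i) (hn : 0 < n) :
    Pr n μ K {ω | ¬ (graphOf ω).Connected}
      ≤ ∑ l ∈ Ico 2 (n / 2 + 1), n.choose l *
          (probSelectWithin μ K n (l - 1) ^ l * probSelectWithin μ K n (n - l - 1) ^ (n - l)) := by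
  calc Pr n μ K {ω | ¬ (graphOf ω).Connected}
      ≤ ∑ x ∈ (Ico 2 (n / 2 + 1)).sigma fun l => powersetCard l univ,
          Pr n μ K (isolatedEvent x.2) := by
        refine Pr_le_sum_Pr K hμ _ _ fun ω hω hwt => ?_
        have hsel : ∀ v, ∃ u ∈ (ω v).2, u ≠ v := fun v => by
          obtain ⟨hcard, hv⟩ := card_eq_and_notMem_of_wt_ne_zero μ K hwt v
          obtain ⟨u, hu⟩ := card_pos.1 (hcard ▸ hone _)
          exact ⟨u, hu, fun huv => hv (huv ▸ hu)⟩
        obtain ⟨S, hS2, hSn, hS⟩ := exists_isolatedEvent_of_not_connected hn hsel hω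
        exact ⟨⟨#S, S⟩, mem_sigma.2 ⟨mem_Ico.2 ⟨hS2, by dsimp only; omega⟩, mem_powersetCard.2
          ⟨subset_univ S, rfl⟩⟩, hS⟩
    _ = _ := by
        rw [sum_sigma]
        refine sum_congr rfl fun l _ => ?_
        rw [sum_congr rfl fun S hS => by rw [Pr_isolatedEvent, (mem_powersetCard.1 hS).2],
          sum_const, card_powersetCard, card_univ, Fintype.card_fin, nsmul_eq_mul]

end Connectivity

section Estimates

theorem mul_sub_mul_le_max {x κ ℓ N w : ℝ} (hx : 0 ≤ x) (hκ : 4 * x + 1 ≤ κ) (hℓ : 2 ≤ ℓ)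
    (hℓN : 2 * ℓ ≤ N) (hw : 1 - Real.exp (-(ℓ * (κ - 1) / (N - 1))) ≤ w) :
    ℓ * x - (N - ℓ) * w
      ≤ max (-2 * ((κ - 1) / 4 - x)) (-(N / 2) * (1 - Real.exp (-1) - x)) := by
  have hN1 : 0 < N - 1 := by linarith
  have he : Real.exp (-1) < 1 / 2 := Real.exp_neg_one_lt_half
  set s := ℓ * (κ - 1) / (N - 1) with hs
  have hs0 : 0 ≤ s := div_nonneg (mul_nonneg (by linarith) (by linarith)) hN1.le
  rcases le_total 1 s with hs1 | hs1
  · refine le_max_of_le_right ?_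
    have hw' : 1 - Real.exp (-1) ≤ w :=
      (sub_le_sub_left (Real.exp_le_exp.2 (neg_le_neg hs1)) 1).trans hw
    have h1 : ℓ * x ≤ N / 2 * x := mul_le_mul_of_nonneg_right (by linarith) hx
    have h2 : N / 2 * (1 - Real.exp (-1)) ≤ (N - ℓ) * w :=
      mul_le_mul (by linarith) hw' (by linarith) (by linarith)
    linarith
  · refine le_max_of_le_left ?_
    have hsN : ℓ * (κ - 1) / 2 ≤ (N - ℓ) * s := by
      have hfrac : 1 / 2 ≤ (N - ℓ) / (N - 1) := by rw [le_div_iff₀ hN1]; linarith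
      calc ℓ * (κ - 1) / 2 = ℓ * (κ - 1) * (1 / 2) := by ring
        _ ≤ ℓ * (κ - 1) * ((N - ℓ) / (N - 1)) :=
            mul_le_mul_of_nonneg_left hfrac (mul_nonneg (by linarith) (by linarith))
        _ = (N - ℓ) * s := by rw [hs]; ring
    have hws : (N - ℓ) * (s * (1 - Real.exp (-1))) ≤ (N - ℓ) * w :=
      mul_le_mul_of_nonneg_left ((mul_one_sub_exp_neg_one_le hs0 hs1).trans hw) (by linarith)
    have h1 : ℓ * (κ - 1) / 2 * (1 - Real.exp (-1)) ≤ (N - ℓ) * s * (1 - Real.exp (-1)) :=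
      mul_le_mul_of_nonneg_right hsN (by linarith)
    have h2 : (κ - 1) / 2 ≤ (1 - Real.exp (-1)) * (κ - 1) := by nlinarith
    have hc : 0 ≤ (1 - Real.exp (-1)) * (κ - 1) / 2 - x := by linarith
    have h3 : 2 * ((1 - Real.exp (-1)) * (κ - 1) / 2 - x)
        ≤ ℓ * ((1 - Real.exp (-1)) * (κ - 1) / 2 - x) := mul_le_mul_of_nonneg_right hℓ hc
    linarith

variable {n r : ℕ} {μ : Fin r → ℝ} {K : Fin r → ℕ}

theorem probSelectWithin_le (hμ : ∀ i, 0 ≤ μ i) (hone : ∀ i, 1 ≤ K i) {m : ℕ} (hm : m ≤ n - 1)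
    (j : Fin r) :
    probSelectWithin μ K n m ≤ (∑ i ∈ univ.erase j, μ i) * ((m : ℝ) / (n - 1 : ℕ))
      + μ j * ((m : ℝ) / (n - 1 : ℕ)) ^ K j := by
  set ρ : ℝ := (m : ℝ) / (n - 1 : ℕ)
  have hρ0 : 0 ≤ ρ := by positivity
  have hρ1 : ρ ≤ 1 := div_le_one_of_le₀ (by exact_mod_cast hm) (Nat.cast_nonneg _)
  have hterm : ∀ c, μ c * ((m.choose (K c) : ℝ) / (n - 1).choose (K c)) ≤ μ c * ρ ^ K c :=
    fun c => mul_le_mul_of_nonneg_left (choose_div_choose_le_pow hm _) (hμ c)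
  calc probSelectWithin μ K n m
      = ∑ c ∈ univ.erase j, μ c * ((m.choose (K c) : ℝ) / (n - 1).choose (K c))
        + μ j * ((m.choose (K j) : ℝ) / (n - 1).choose (K j)) :=
        (sum_erase_add _ _ (mem_univ j)).symm
    _ ≤ ∑ c ∈ univ.erase j, μ c * ρ + μ j * ρ ^ K j :=
        add_le_add (sum_le_sum fun c _ => (hterm c).trans <| mul_le_mul_of_nonneg_left
          (pow_le_of_le_one hρ0 hρ1 (Nat.one_le_iff_ne_zero.1 (hone c))) (hμ c)) (hterm j)
    _ = (∑ i ∈ univ.erase j, μ i) * ρ + μ j * ρ ^ K j := by rw [sum_mul]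

theorem probSelectWithin_le_mul_exp (hμ : ∀ i, 0 ≤ μ i) (hone : ∀ i, 1 ≤ K i) {j : Fin r}
    {μt x : ℝ} (hμt : μt = ∑ i ∈ univ.erase j, μ i) (hx : (1 / 2 : ℝ) ^ (K j - 1) ≤ μt * x)
    {m : ℕ} (hm : 2 * m ≤ n - 1) :
    probSelectWithin μ K n m ≤ μt * ((m : ℝ) / (n - 1 : ℕ)) * Real.exp (μ j * x) := by
  set ρ : ℝ := (m : ℝ) / (n - 1 : ℕ)
  have hρ0 : 0 ≤ ρ := by positivity
  have hρ : ρ ≤ 1 / 2 := by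
    have : (2 * m : ℝ) ≤ (n - 1 : ℕ) := by exact_mod_cast hm
    exact div_le_of_le_mul₀ (Nat.cast_nonneg _) (by norm_num) (by linarith)
  have hμt0 : 0 ≤ μt := hμt ▸ sum_nonneg fun i _ => hμ i
  have hq0 : 0 ≤ μ j := hμ j
  calc probSelectWithin μ K n m ≤ μt * ρ + μ j * ρ ^ K j :=
        (probSelectWithin_le hμ hone (by omega) j).trans_eq (by rw [hμt])
    _ ≤ μt * ρ + μ j * (μt * x * ρ) := by
        gcongr
        calc ρ ^ K j = ρ ^ (K j - 1) * ρ := by rw [← pow_succ, Nat.sub_add_cancel (hone j)]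
          _ ≤ (1 / 2) ^ (K j - 1) * ρ := by gcongr
          _ ≤ μt * x * ρ := by gcongr
    _ = μt * ρ * (1 + μ j * x) := by ring
    _ ≤ μt * ρ * Real.exp (μ j * x) := by
        gcongr
        linarith [Real.add_one_le_exp (μ j * x)]

theorem probSelectWithin_le_mul_exp_neg (hμ : ∀ i, 0 ≤ μ i) (hsum : ∑ i, μ i = 1)
    (hone : ∀ i, 1 ≤ K i) (j : Fin r) {m : ℕ} (hm : m ≤ n - 1) :
    probSelectWithin μ K n m ≤ (m : ℝ) / (n - 1 : ℕ)
      * Real.exp (-(μ j * (1 - ((m : ℝ) / (n - 1 : ℕ)) ^ (K j - 1)))) := by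
  set ρ : ℝ := (m : ℝ) / (n - 1 : ℕ)
  have hρ0 : 0 ≤ ρ := by positivity
  have hq : ∑ i ∈ univ.erase j, μ i + μ j = 1 := by rw [sum_erase_add _ _ (mem_univ j), hsum]
  calc probSelectWithin μ K n m ≤ (∑ i ∈ univ.erase j, μ i) * ρ + μ j * ρ ^ K j :=
        probSelectWithin_le hμ hone hm j
    _ = ρ * (1 - μ j * (1 - ρ ^ (K j - 1))) := by
        rw [← Nat.sub_add_cancel (hone j), pow_succ, Nat.add_sub_cancel]
        linear_combination ρ * hq
    _ ≤ ρ * Real.exp (-(μ j * (1 - ρ ^ (K j - 1)))) := by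
        gcongr
        exact Real.one_sub_le_exp_neg _

theorem choose_mul_pow_mul_pow_le_exp {n l : ℕ} {a b μt z y q x w : ℝ} (hln : l ≤ n)
    (ha0 : 0 ≤ a) (hb0 : 0 ≤ b) (hμt0 : 0 ≤ μt) (hz0 : 0 ≤ z) (hy0 : 0 ≤ y) (hzy : z + y ≤ 1)
    (ha : a ≤ μt * z * Real.exp (q * x)) (hb : b ≤ y * Real.exp (-(q * w))) :
    n.choose l * (a ^ l * b ^ (n - l)) ≤ μt ^ l * Real.exp (q * (l * x - (n - l) * w)) := by
  have hexponent : Real.exp (q * x) ^ l * Real.exp (-(q * w)) ^ (n - l)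
      = Real.exp (q * (l * x - (n - l) * w)) := by
    rw [← Real.exp_nat_mul, ← Real.exp_nat_mul, ← Real.exp_add, Nat.cast_sub hln]
    ring_nf
  calc n.choose l * (a ^ l * b ^ (n - l))
      ≤ n.choose l * ((μt * z * Real.exp (q * x)) ^ l * (y * Real.exp (-(q * w))) ^ (n - l)) := by
        gcongr
    _ = μt ^ l * Real.exp (q * (l * x - (n - l) * w)) * (n.choose l * z ^ l * y ^ (n - l)) := by
        rw [← hexponent]; ring
    _ ≤ μt ^ l * Real.exp (q * (l * x - (n - l) * w)) := by
        grw [choose_mul_pow_mul_pow_le_one hz0 hy0 hzy n l, mul_one]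

theorem choose_mul_probSelectWithin_le (hμ : ∀ i, 0 ≤ μ i) (hsum : ∑ i, μ i = 1)
    (hone : ∀ i, 1 ≤ K i) {j : Fin r} {μt x : ℝ} (hμt : μt = ∑ i ∈ univ.erase j, μ i)
    (hx0 : 0 ≤ x) (hx : (1 / 2 : ℝ) ^ (K j - 1) ≤ μt * x) (hκ : 4 * x + 1 ≤ K j) {l : ℕ}
    (hl : 2 ≤ l) (hln : 2 * l ≤ n) :
    n.choose l * (probSelectWithin μ K n (l - 1) ^ l * probSelectWithin μ K n (n - l - 1) ^ (n - l))
      ≤ μt ^ l * max (Real.exp (-2 * μ j * (((K j : ℝ) - 1) / 4 - x)))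
          (Real.exp (-μ j * ((n : ℝ) / 2) * (1 - Real.exp (-1) - x))) := by
  have ha := probSelectWithin_le_mul_exp hμ hone hμt hx (n := n) (m := l - 1) (by omega)
  have hb := probSelectWithin_le_mul_exp_neg hμ hsum hone j (n := n) (m := n - l - 1) (by omega)
  set z : ℝ := ((l - 1 : ℕ) : ℝ) / (n - 1 : ℕ)
  set y : ℝ := ((n - l - 1 : ℕ) : ℝ) / (n - 1 : ℕ)
  have hlR : (2 : ℝ) ≤ l := by exact_mod_cast hl
  have hlnR : 2 * (l : ℝ) ≤ n := by exact_mod_cast hln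
  have hN1 : (0 : ℝ) < n - 1 := by linarith
  have hz : z = ((l : ℝ) - 1) / (n - 1) := by
    simp only [z]; rw [Nat.cast_sub (by omega), Nat.cast_sub (by omega), Nat.cast_one]
  have hy : y = 1 - l / ((n : ℝ) - 1) := by
    simp only [y]
    rw [Nat.cast_sub (by omega), Nat.cast_sub (by omega), Nat.cast_sub (by omega), Nat.cast_one,
      eq_sub_iff_add_eq, ← add_div, div_eq_one_iff_eq hN1.ne']
    ring
  have hy0 : 0 ≤ y := by positivity
  have hzy : z + y ≤ 1 := by
    rw [hz, hy, ← sub_nonneg]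
    field_simp; linarith
  have hw : 1 - Real.exp (-(l * ((K j : ℝ) - 1) / (n - 1))) ≤ 1 - y ^ (K j - 1) := by
    have := one_sub_pow_le_exp_neg_mul (t := l / ((n : ℝ) - 1)) (hy ▸ hy0) (K j - 1)
    rw [← hy, Nat.cast_sub (hone j), Nat.cast_one] at this
    ring_nf at this ⊢; linarith
  have hmax := mul_sub_mul_le_max hx0 hκ hlR hlnR hw
  have hμt0 : 0 ≤ μt := hμt ▸ sum_nonneg fun i _ => hμ i
  refine (choose_mul_pow_mul_pow_le_exp (by omega) (probSelectWithin_nonneg K hμ n _)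
    (probSelectWithin_nonneg K hμ n _) hμt0 (by positivity) hy0 hzy ha hb).trans
    (mul_le_mul_of_nonneg_left ?_ (pow_nonneg hμt0 l))
  rcases le_max_iff.1 hmax with h | h
  · exact le_max_of_le_left (Real.exp_le_exp.2 (by nlinarith [hμ j]))
  · exact le_max_of_le_right (Real.exp_le_exp.2 (by nlinarith [hμ j]))

end Estimates

theorem one_law_precise_general
    (r : ℕ) (hr : 2 ≤ r) (μ : Fin r → ℝ)
    (hμ : ∀ i, 0 < μ i) (hsum : ∑ i, μ i = 1)
    (lst : Fin r)
    (μt : ℝ) (hμt : μt = ∑ i ∈ Finset.univ.erase lst, μ i)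
    (n : ℕ) (hn : 2 ≤ n)
    (K : Fin r → ℕ) (hone : ∀ i, 1 ≤ K i) (hlt : ∀ i, K i < n)
    (hbig : ⌈4 * ((1 / 2 : ℝ) ^ (K lst - 1) / μt) + 1⌉ ≤ (K lst : ℤ)) :
    Pconn n μ K ≥ 1 - (μt ^ 2 / (1 - μt)) *
      max
        (Real.exp (-2 * (1 - μt) *
          (((K lst : ℝ) - 1) / 4 - (1 / 2 : ℝ) ^ (K lst - 1) / μt)))
        (Real.exp (-(1 - μt) * ((n : ℝ) / 2) *
          (1 - Real.exp (-1) - (1 / 2 : ℝ) ^ (K lst - 1) / μt))) := by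
  set x := (1 / 2 : ℝ) ^ (K lst - 1) / μt
  have hq : 1 - μt = μ lst := by
    rw [hμt, ← hsum, ← sum_erase_add _ _ (mem_univ lst)]; ring
  have hμt0 : 0 < μt := by
    obtain ⟨i, hi⟩ := Fintype.exists_ne_of_one_lt_card (by rwa [Fintype.card_fin]) lst
    exact hμt ▸ sum_pos' (fun i _ => (hμ i).le) ⟨i, mem_erase.2 ⟨hi, mem_univ i⟩, hμ i⟩
  have hx : (1 / 2 : ℝ) ^ (K lst - 1) ≤ μt * x := (mul_div_cancel₀ _ hμt0.ne').ge
  have hκ : 4 * x + 1 ≤ K lst := (Int.le_ceil _).trans (by exact_mod_cast hbig)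
  have hPconn : Pconn n μ K + Pr n μ K {ω | ¬ (graphOf ω).Connected} = 1 := by
    rw [← sum_wt μ K hsum hlt, ← Pr_add_Pr_compl μ K, Set.compl_ofPred]; rfl
  rw [hq]
  calc 1 - μt ^ 2 / μ lst * _ ≤ 1 - (∑ l ∈ Ico 2 (n / 2 + 1), μt ^ l) * _ := by
        gcongr
        exact (geom_sum_Ico_le_of_lt_one hμt0.le (by linarith [hμ lst])).trans_eq (by rw [hq])
    _ ≤ 1 - Pr n μ K {ω | ¬ (graphOf ω).Connected} := by
        rw [sum_mul]
        refine sub_le_sub_left ((Pr_not_connected_le (fun i => (hμ i).le) hone (by omega)).trans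
          (sum_le_sum fun l hl => ?_)) 1
        obtain ⟨hl2, hln⟩ := mem_Ico.1 hl
        exact choose_mul_probSelectWithin_le (fun i => (hμ i).le) hsum hone hμt
          (by positivity) hx hκ hl2 (by omega)
    _ = Pconn n μ K := by linarith

/-- precise form of the one-law, eq. (9) of the paper. For every `n ≥ 2`
and admissible `K` with `K₁ = 1` and `K_r ≥ ⌈4·((1/2)^{K_r−1}/μ̃) + 1⌉`,
`P(n; μ, K) ≥ 1 − (μ̃²/(1 − μ̃)) · Ψ(n, μ, K)`. -/
theorem one_law_precise
    (r : ℕ) (hr : 2 ≤ r) (μ : Fin r → ℝ)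
    (hμ : ∀ i, 0 < μ i) (hsum : ∑ i, μ i = 1)
    (c0 lst : Fin r) (hc0 : (c0 : ℕ) = 0) (hlst : (lst : ℕ) = r - 1)
    (μt : ℝ) (hμt : μt = ∑ i ∈ Finset.univ.erase lst, μ i)
    (n : ℕ) (hn : 2 ≤ n)
    (K : Fin r → ℕ) (hmono : Monotone K) (hone : ∀ i, 1 ≤ K i) (hlt : ∀ i, K i < n)
    (hK1 : K c0 = 1)
    (hbig : ⌈4 * ((1 / 2 : ℝ) ^ (K lst - 1) / μt) + 1⌉ ≤ (K lst : ℤ)) :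
    Pconn n μ K ≥ 1 - (μt ^ 2 / (1 - μt)) *
      max
        (Real.exp (-2 * (1 - μt) *
          (((K lst : ℝ) - 1) / 4 - (1 / 2 : ℝ) ^ (K lst - 1) / μt)))
        (Real.exp (-(1 - μt) * ((n : ℝ) / 2) *
          (1 - Real.exp (-1) - (1 / 2 : ℝ) ^ (K lst - 1) / μt))) :=
  one_law_precise_general r hr μ hμ hsum lst μt hμt n hn K hone hlt hbig
end
end

section
/- In the inhomogeneous random K-out graph H(n; μ, K) with n ≥ 5, K_1 = 1, and 1 = K_1 ≤ K_2 ≤ … ≤ K_r < n, the probability of the joint event U_{12} ∩ U_{34} equals μ_1⁴ · (1/(n−1))⁴ · ( Σ_{i=1}^r μ_i · C(n−5, K_i)/C(n−1, K_i) )^{n−4}, i.e., E[χ_{12} χ_{34}] equals this quantity; here C(x, y) = 0 when x < y. -/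
open Finset Filter

noncomputable section

/-!
Both the weight `wt` and the event `U_{ab} ∩ U_{a'b'}` factor over the vertices, so the
probability is a product of one sum per vertex. Each of the four paired vertices must have
class `c` and select exactly its partner, contributing `μ c / C(n-1, 1) = μ c / (n-1)`; each of
the other `n - 4` vertices must avoid all four, and the `K i`-subsets of the `n - 5` remaining
vertices contribute `∑ i, μ i C(n-5, K i) / C(n-1, K i)`.
-/

theorem Fintype.sum_indicator_pi_prod {ι : Type*} {κ : ι → Type*} [Fintype ι] [DecidableEq ι]
    [∀ i, Fintype (κ i)] {R : Type*} [CommSemiring R] (t : ∀ i, Set (κ i)) (f : ∀ i, κ i → R) :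
    ∑ x : ∀ i, κ i, (Set.univ.pi t).indicator (fun x => ∏ i, f i (x i)) x =
      ∏ i, ∑ j, (t i).indicator (f i) j := by
  classical
  rw [Fintype.prod_sum]
  refine Finset.sum_congr rfl fun x _ => ?_
  simp only [Set.indicator_apply, Set.mem_univ_pi]
  rw [Finset.prod_ite_zero]
  simp only [mem_univ, forall_const]

def vertexWeight {r : ℕ} (n : ℕ) (μ : Fin r → ℝ) (K : Fin r → ℕ)
    (v : Fin n) (p : Fin r × Finset (Fin n)) : ℝ :=
  if p.2.card = K p.1 ∧ v ∉ p.2 then μ p.1 / ((n - 1).choose (K p.1) : ℝ) else 0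

theorem Pr_univ_pi {n r : ℕ} (μ : Fin r → ℝ) (K : Fin r → ℕ)
    (S : Fin n → Set (Fin r × Finset (Fin n))) :
    Pr n μ K (Set.univ.pi S) = ∏ v, ∑ p, (S v).indicator (vertexWeight n μ K v) p :=
  Fintype.sum_indicator_pi_prod S (vertexWeight n μ K)

theorem sum_indicator_vertexWeight_singleton {n r : ℕ} (μ : Fin r → ℝ) (K : Fin r → ℕ)
    {c : Fin r} (hK : K c = 1) {a b : Fin n} (hab : a ≠ b) :
    ∑ p, ({(c, {b})} : Set (Fin r × Finset (Fin n))).indicator (vertexWeight n μ K a) p =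
      μ c / ((n : ℝ) - 1) := by
  simp [Set.indicator_apply, vertexWeight, hK, hab, Nat.cast_sub a.pos]

theorem sum_indicator_vertexWeight_disjoint {n r : ℕ} (μ : Fin r → ℝ) (K : Fin r → ℕ)
    {a : Fin n} {B : Finset (Fin n)} (ha : a ∉ B) :
    ∑ p, {p : Fin r × Finset (Fin n) | Disjoint p.2 B}.indicator (vertexWeight n μ K a) p =
      ∑ i, μ i * ((n - (B.card + 1)).choose (K i) : ℝ) / ((n - 1).choose (K i) : ℝ) := by
  rw [Fintype.sum_prod_type]
  refine sum_congr rfl fun i _ => ?_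
  have hmem : ∀ S : Finset (Fin n), S ∈ powersetCard (K i) (insert a B)ᶜ ↔
      Disjoint S B ∧ S.card = K i ∧ a ∉ S := by
    intro S
    rw [mem_powersetCard, subset_compl_iff_disjoint_right, disjoint_insert_right]
    tauto
  have hcard : (insert a B)ᶜ.card = n - (B.card + 1) := by
    rw [card_compl, card_insert_of_notMem ha, Fintype.card_fin]
  simp only [Set.indicator_apply, Set.mem_ofPred_eq, vertexWeight, ← ite_and, ← hmem]
  rw [sum_ite_mem, univ_inter, sum_const, card_powersetCard, hcard, nsmul_eq_mul]
  ring

def UeventSlot {n r : ℕ} (c : Fin r) (a b v : Fin n) : Set (Fin r × Finset (Fin n)) :=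
  if v = a then {(c, {b})} else if v = b then {(c, {a})} else {p | a ∉ p.2 ∧ b ∉ p.2}

theorem Uevent_eq_univ_pi {n r : ℕ} (c : Fin r) {a b : Fin n} (hab : a ≠ b) :
    Uevent c a b = Set.univ.pi (UeventSlot c a b) := by
  ext ω
  simp only [Uevent, Set.mem_ofPred_eq, Set.mem_univ_pi, UeventSlot]
  constructor
  · rintro ⟨hca, hcb, hΓa, hΓb, hrest⟩ v
    split_ifs with hva hvb
    · subst hva; simp [Prod.ext_iff, hca, hΓa]
    · subst hvb; simp [Prod.ext_iff, hcb, hΓb]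
    · exact hrest v hva hvb
  · intro h
    have ha : ω a = (c, {b}) := by simpa using h a
    have hb : ω b = (c, {a}) := by simpa [hab.symm] using h b
    exact ⟨by rw [ha], by rw [hb], by rw [ha], by rw [hb],
      fun v hva hvb => by simpa [hva, hvb] using h v⟩

theorem UeventSlot_inter_UeventSlot_of_notMem {n r : ℕ} (c : Fin r) {a b a' b' v : Fin n}
    (hv : v ∉ ({a, b, a', b'} : Finset (Fin n))) :
    UeventSlot c a b v ∩ UeventSlot c a' b' v = {p | Disjoint p.2 {a, b, a', b'}} := by
  simp only [mem_insert, mem_singleton, not_or] at hv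
  ext p
  simp only [UeventSlot, hv, ↓reduceIte, Set.mem_inter_iff, Set.mem_ofPred_eq,
    disjoint_insert_right, disjoint_singleton_right]
  tauto

theorem Pr_Uevent_inter_Uevent {n r : ℕ} (μ : Fin r → ℝ) (K : Fin r → ℕ) {c : Fin r}
    (hK : K c = 1) {a b a' b' : Fin n} (hab : a ≠ b) (haa' : a ≠ a') (hab' : a ≠ b')
    (hba' : b ≠ a') (hbb' : b ≠ b') (ha'b' : a' ≠ b') :
    Pr n μ K (Uevent c a b ∩ Uevent c a' b') =
      (μ c / ((n : ℝ) - 1)) ^ 4 *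
        (∑ i, μ i * ((n - 5).choose (K i) : ℝ) / ((n - 1).choose (K i) : ℝ)) ^ (n - 4) := by
  set A : Finset (Fin n) := {a, b, a', b'} with hA
  have hAcard : A.card = 4 := by
    simp [card_insert_of_notMem, *]
  have hspecial : ∀ v ∈ A, ∑ p, (UeventSlot c a b v ∩ UeventSlot c a' b' v).indicator
      (vertexWeight n μ K v) p = μ c / ((n : ℝ) - 1) := by
    simp only [hA, mem_insert, mem_singleton]
    rintro v (rfl | rfl | rfl | rfl)
    · rw [show UeventSlot c v b v ∩ UeventSlot c a' b' v = {(c, {b})} by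
        simp [UeventSlot, haa', hab', hba'.symm, hbb'.symm]]
      exact sum_indicator_vertexWeight_singleton μ K hK hab
    · rw [show UeventSlot c a v v ∩ UeventSlot c a' b' v = {(c, {a})} by
        simp [UeventSlot, hab.symm, hba', hbb', haa'.symm, hab'.symm]]
      exact sum_indicator_vertexWeight_singleton μ K hK hab.symm
    · rw [show UeventSlot c a b v ∩ UeventSlot c v b' v = {(c, {b'})} by
        simp [UeventSlot, haa'.symm, hba'.symm, hab', hbb']]
      exact sum_indicator_vertexWeight_singleton μ K hK ha'b'
    · rw [show UeventSlot c a b v ∩ UeventSlot c a' v v = {(c, {a'})} by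
        simp [UeventSlot, hab'.symm, hbb'.symm, ha'b'.symm, haa', hba']]
      exact sum_indicator_vertexWeight_singleton μ K hK ha'b'.symm
  have hgeneric : ∀ v ∈ univ \ A, ∑ p, (UeventSlot c a b v ∩ UeventSlot c a' b' v).indicator
      (vertexWeight n μ K v) p =
        ∑ i, μ i * ((n - 5).choose (K i) : ℝ) / ((n - 1).choose (K i) : ℝ) := by
    intro v hv
    have hvA : v ∉ A := (mem_sdiff.mp hv).2
    rw [UeventSlot_inter_UeventSlot_of_notMem c hvA, sum_indicator_vertexWeight_disjoint μ K hvA,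
      hAcard]
  rw [Uevent_eq_univ_pi c hab, Uevent_eq_univ_pi c ha'b', ← Set.pi_inter_distrib, Pr_univ_pi,
    ← prod_sdiff (subset_univ A), prod_congr rfl hgeneric, prod_congr rfl hspecial, prod_const,
    prod_const, card_sdiff_of_subset (subset_univ A), card_univ, Fintype.card_fin, hAcard]
  ring

theorem prob_U12_U34_general
    (r : ℕ) (μ : Fin r → ℝ) (c0 : Fin r) (n : ℕ) (K : Fin r → ℕ) (hK1 : K c0 = 1)
    (v0 v1 v2 v3 : Fin n)
    (hv0 : (v0 : ℕ) = 0) (hv1 : (v1 : ℕ) = 1) (hv2 : (v2 : ℕ) = 2) (hv3 : (v3 : ℕ) = 3) :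
    Pr n μ K (Uevent c0 v0 v1 ∩ Uevent c0 v2 v3) =
      (μ c0) ^ 4 * (1 / ((n : ℝ) - 1)) ^ 4 *
        (∑ i, μ i * ((n - 5).choose (K i) : ℝ) / ((n - 1).choose (K i) : ℝ)) ^ (n - 4) := by
  rw [Pr_Uevent_inter_Uevent μ K hK1 (Fin.ne_of_val_ne (by omega)) (Fin.ne_of_val_ne (by omega))
    (Fin.ne_of_val_ne (by omega)) (Fin.ne_of_val_ne (by omega)) (Fin.ne_of_val_ne (by omega))
    (Fin.ne_of_val_ne (by omega))]
  ring

/-- With `K₁ = 1` and `n ≥ 5`, the probability of the joint event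
`U_{12} ∩ U_{34}` equals `μ₁⁴ (1/(n−1))⁴ ( ∑ i, μ i C(n−5, K i)/C(n−1, K i) )^{n−4}`. -/
theorem prob_U12_U34
    (r : ℕ) (hr : 1 ≤ r) (μ : Fin r → ℝ)
    (hμ : ∀ i, 0 < μ i) (hsum : ∑ i, μ i = 1)
    (c0 : Fin r) (hc0 : (c0 : ℕ) = 0)
    (n : ℕ) (hn : 5 ≤ n)
    (K : Fin r → ℕ) (hmono : Monotone K) (hone : ∀ i, 1 ≤ K i) (hlt : ∀ i, K i < n)
    (hK1 : K c0 = 1)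
    (v0 v1 v2 v3 : Fin n)
    (hv0 : (v0 : ℕ) = 0) (hv1 : (v1 : ℕ) = 1) (hv2 : (v2 : ℕ) = 2) (hv3 : (v3 : ℕ) = 3) :
    Pr n μ K (Uevent c0 v0 v1 ∩ Uevent c0 v2 v3) =
      (μ c0) ^ 4 * (1 / ((n : ℝ) - 1)) ^ 4 *
        (∑ i, μ i * ((n - 5).choose (K i) : ℝ) / ((n - 1).choose (K i) : ℝ)) ^ (n - 4) :=
  prob_U12_U34_general r μ c0 n K hK1 v0 v1 v2 v3 hv0 hv1 hv2 hv3
end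
end

section
/- In the inhomogeneous random K-out graph H(n; μ, K) with r ≥ 2, 1 ≤ K_1 ≤ … ≤ K_r < n, and μ̃ = Σ_{i=1}^{r−1} μ_i = 1 − μ_r, for each ℓ with 2 ≤ ℓ ≤ ⌊n/2⌋ one has P[B_{n,ℓ}] ≤ ( μ̃·(ℓ−1)/(n−1) + (1−μ̃)·((ℓ−1)/(n−1))^{K_r} )^ℓ · ( μ̃·(n−ℓ−1)/(n−1) + (1−μ̃)·((n−ℓ−1)/(n−1))^{K_r} )^{n−ℓ}. -/
/-!
On `B_{n,ℓ}` every vertex selects only vertices on its own side of the cut, and the selections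
of distinct vertices are independent, so `P[B_{n,ℓ}]` is a product over the vertices. A class-`c`
vertex whose side has `m` vertices keeps its selection on its side with probability
`C(m-1, K_c) / C(n-1, K_c) ≤ ((m-1)/(n-1))^{K_c}`; since `K_c ≥ 1`, this is at most
`(m-1)/(n-1)` for the first `r - 1` classes, while the last class keeps the exponent `K_r`.
-/

open Finset Filter

noncomputable section

namespace Nat

theorem descFactorial_mul_pow_le_of_le {a b : ℕ} (hab : a ≤ b) (k : ℕ) :
    a.descFactorial k * b ^ k ≤ b.descFactorial k * a ^ k := by
  induction k with
  | zero => simp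
  | succ k ih =>
    have hstep : (a - k) * b ≤ (b - k) * a := by
      rw [Nat.sub_mul, Nat.sub_mul, mul_comm b a]
      exact Nat.sub_le_sub_left (Nat.mul_le_mul_left k hab) (a * b)
    calc a.descFactorial (k + 1) * b ^ (k + 1)
        = ((a - k) * b) * (a.descFactorial k * b ^ k) := by rw [descFactorial_succ]; ring
      _ ≤ ((b - k) * a) * (b.descFactorial k * a ^ k) := Nat.mul_le_mul hstep ih
      _ = b.descFactorial (k + 1) * a ^ (k + 1) := by rw [descFactorial_succ]; ring

theorem choose_mul_pow_le_of_le {a b : ℕ} (hab : a ≤ b) (k : ℕ) :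
    a.choose k * b ^ k ≤ b.choose k * a ^ k := by
  have h := descFactorial_mul_pow_le_of_le hab k
  rw [descFactorial_eq_factorial_mul_choose, descFactorial_eq_factorial_mul_choose,
    mul_assoc, mul_assoc] at h
  exact Nat.le_of_mul_le_mul_left h k.factorial_pos

theorem cast_choose_div_cast_choose_le {a b : ℕ} (hab : a ≤ b) (k : ℕ) :
    (a.choose k : ℝ) / b.choose k ≤ ((a : ℝ) / b) ^ k := by
  rcases lt_or_ge b k with hbk | hkb
  · rw [choose_eq_zero_of_lt hbk, cast_zero, div_zero]
    positivity
  rcases k.eq_zero_or_pos with rfl | hk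
  · simp
  have hb : (0 : ℝ) < b := by exact_mod_cast hk.trans_le hkb
  rw [div_pow, div_le_div_iff₀ (by exact_mod_cast choose_pos hkb) (by positivity),
    mul_comm ((a : ℝ) ^ k)]
  exact_mod_cast choose_mul_pow_le_of_le hab k

end Nat

theorem Fin.card_filter_val_not_lt {n l : ℕ} (hl : l ≤ n) :
    #{i : Fin n | ¬ (i : ℕ) < l} = n - l := by
  rw [filter_not, card_sdiff_of_subset (filter_subset _ _), card_univ, Fintype.card_fin,
    Fin.card_filter_val_lt, min_eq_right hl]

theorem sum_mul_choose_div_choose_le {ι : Type*} [Fintype ι] [DecidableEq ι] {μ : ι → ℝ}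
    (hμ : ∀ i, 0 ≤ μ i) {K : ι → ℕ} {i₀ : ι} (hK : ∀ i ≠ i₀, 1 ≤ K i) {j N : ℕ} (hjN : j ≤ N) :
    ∑ i, μ i * ((j.choose (K i) : ℝ) / N.choose (K i)) ≤
      (∑ i ∈ univ.erase i₀, μ i) * ((j : ℝ) / N) + μ i₀ * ((j : ℝ) / N) ^ K i₀ := by
  have hx₀ : (0 : ℝ) ≤ j / N := by positivity
  have hx₁ : (j : ℝ) / N ≤ 1 := div_le_one_of_le₀ (by exact_mod_cast hjN) (by positivity)
  rw [← add_sum_erase univ _ (mem_univ i₀), add_comm, sum_mul]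
  refine add_le_add (sum_le_sum fun i hi => mul_le_mul_of_nonneg_left ?_ (hμ i))
    (mul_le_mul_of_nonneg_left (Nat.cast_choose_div_cast_choose_le hjN _) (hμ i₀))
  calc (j.choose (K i) : ℝ) / N.choose (K i) ≤ ((j : ℝ) / N) ^ K i :=
        Nat.cast_choose_div_cast_choose_le hjN _
    _ ≤ (j : ℝ) / N := pow_le_of_le_one hx₀ hx₁
      (Nat.one_le_iff_ne_zero.mp (hK i (ne_of_mem_erase hi)))

section Model

variable {n r : ℕ} (μ : Fin r → ℝ) (K : Fin r → ℕ)

theorem Pr_forall_mem (E : Fin n → Set (Fin r × Finset (Fin n))) :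
    Pr n μ K {ω | ∀ v, ω v ∈ E v} = ∏ v, ∑ p, (E v).indicator (vertexWt μ K v) p := by
  rw [Fintype.prod_sum, Pr]
  refine sum_congr rfl fun ω _ => ?_
  by_cases h : ∀ v, ω v ∈ E v
  · rw [Set.indicator_of_mem (s := {ω : Config n r | ∀ v, ω v ∈ E v}) h, wt]
    exact prod_congr rfl fun v _ => (Set.indicator_of_mem (h v) (vertexWt μ K v)).symm
  · obtain ⟨v, hv⟩ := not_forall.1 h
    rw [Set.indicator_of_notMem (s := {ω : Config n r | ∀ v, ω v ∈ E v}) h, eq_comm]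
    exact prod_eq_zero (mem_univ v) (Set.indicator_of_notMem hv _)

theorem sum_indicator_subset_vertexWt (A : Finset (Fin n)) (v : Fin n) :
    ∑ p, {p : Fin r × Finset (Fin n) | p.2 ⊆ A}.indicator (vertexWt μ K v) p =
      ∑ c, μ c * (((A.erase v).card.choose (K c) : ℝ) / (n - 1).choose (K c)) := by
  rw [Fintype.sum_prod_type]
  refine sum_congr rfl fun c _ => ?_
  have hterm : ∀ B : Finset (Fin n),
      {p : Fin r × Finset (Fin n) | p.2 ⊆ A}.indicator (vertexWt μ K v) (c, B) =
        if B ∈ (A.erase v).powersetCard (K c) then μ c / ((n - 1).choose (K c) : ℝ) else 0 := by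
    intro B
    simp only [Set.indicator_apply, Set.mem_ofPred_eq, vertexWt, mem_powersetCard, subset_erase]
    split_ifs <;> tauto
  simp_rw [hterm]
  rw [sum_ite_mem, univ_inter, sum_const, card_powersetCard, nsmul_eq_mul]
  ring

theorem Pr_forall_subset (A : Fin n → Finset (Fin n)) :
    Pr n μ K {ω | ∀ v, (ω v).2 ⊆ A v} =
      ∏ v, ∑ c, μ c * ((((A v).erase v).card.choose (K c) : ℝ) / (n - 1).choose (K c)) := by
  simp_rw [← sum_indicator_subset_vertexWt]
  exact Pr_forall_mem μ K fun v => {p | p.2 ⊆ A v}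

end Model

section Bipartition

variable {n : ℕ}

def sameSide (l : ℕ) (v : Fin n) : Finset (Fin n) := {u | (u : ℕ) < l ↔ (v : ℕ) < l}

theorem Bevent_eq_forall_subset_sameSide {r l : ℕ} :
    Bevent n r l = {ω | ∀ v, (ω v).2 ⊆ sameSide l v} := by
  ext ω
  simp only [Bevent, sameSide, Set.mem_ofPred_eq, subset_iff, mem_filter, mem_univ, true_and]
  constructor
  · intro h v u hu
    by_contra hne
    by_cases hv : (v : ℕ) < l
    · exact (h v u hv fun hu' => hne (iff_of_true hu' hv)).2 hu
    · exact (h u v (by_contra fun hu' => hne (iff_of_false hu' hv)) hv).1 hu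
  · intro h u v hu hv
    exact ⟨fun hmem => hv ((h v hmem).1 hu), fun hmem => hv ((h u hmem).2 hu)⟩

theorem card_erase_sameSide {l : ℕ} (hl : l ≤ n) (v : Fin n) :
    ((sameSide l v).erase v).card = if (v : ℕ) < l then l - 1 else n - l - 1 := by
  rw [card_erase_of_mem (by simp [sameSide])]
  by_cases hv : (v : ℕ) < l
  · simp [sameSide, hv, Fin.card_filter_val_lt, hl]
  · simp only [sameSide, hv, iff_false, Fin.card_filter_val_not_lt hl, if_false]

theorem prod_sameSide {M : Type*} [CommMonoid M] {l : ℕ} (hl : l ≤ n) (f : ℕ → M) :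
    ∏ v : Fin n, f ((sameSide l v).erase v).card = f (l - 1) ^ l * f (n - l - 1) ^ (n - l) := by
  simp_rw [card_erase_sameSide hl, apply_ite f]
  rw [prod_ite, prod_const, prod_const, Fin.card_filter_val_not_lt hl, Fin.card_filter_val_lt,
    min_eq_right hl]

end Bipartition

theorem prob_B_n_ell_upper_general
    (r : ℕ) (μ : Fin r → ℝ)
    (hμ : ∀ i, 0 < μ i) (hsum : ∑ i, μ i = 1)
    (lst : Fin r)
    (μt : ℝ) (hμt : μt = ∑ i ∈ Finset.univ.erase lst, μ i)
    (n : ℕ)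
    (K : Fin r → ℕ) (hone : ∀ i, 1 ≤ K i)
    (l : ℕ) (hl2 : 2 ≤ l) (hl : l ≤ n / 2) :
    Pr n μ K (Bevent n r l) ≤
      (μt * ((l : ℝ) - 1) / ((n : ℝ) - 1) +
          (1 - μt) * (((l : ℝ) - 1) / ((n : ℝ) - 1)) ^ (K lst)) ^ l *
        (μt * ((n : ℝ) - (l : ℝ) - 1) / ((n : ℝ) - 1) +
          (1 - μt) * (((n : ℝ) - (l : ℝ) - 1) / ((n : ℝ) - 1)) ^ (K lst)) ^ (n - l) := by
  have hμlst : μ lst = 1 - μt := by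
    rw [hμt, ← hsum, ← add_sum_erase univ μ (mem_univ lst), add_sub_cancel_right]
  set bound : ℕ → ℝ := fun j =>
    μt * ((j : ℝ) / (n - 1 : ℕ)) + (1 - μt) * ((j : ℝ) / (n - 1 : ℕ)) ^ K lst
  calc Pr n μ K (Bevent n r l)
      = ∏ v, ∑ c, μ c * ((((sameSide l v).erase v).card.choose (K c) : ℝ) /
          (n - 1).choose (K c)) := by
        rw [Bevent_eq_forall_subset_sameSide, Pr_forall_subset]
    _ ≤ ∏ v : Fin n, bound ((sameSide l v).erase v).card := by
        refine prod_le_prod (fun v _ => sum_nonneg fun c _ => mul_nonneg (hμ c).le (by positivity))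
          fun v _ => ?_
        have hj : ((sameSide l v).erase v).card ≤ n - 1 := by
          simpa using card_le_card (erase_subset_erase v (subset_univ (sameSide l v)))
        have h := sum_mul_choose_div_choose_le (fun c => (hμ c).le) (i₀ := lst)
          (fun c _ => hone c) hj
        rwa [← hμt, hμlst] at h
    _ = bound (l - 1) ^ l * bound (n - l - 1) ^ (n - l) := prod_sameSide (by omega) bound
    _ = _ := by
        simp only [bound, Nat.cast_sub (show 1 ≤ l by omega), Nat.cast_sub (show 1 ≤ n by omega),
          Nat.cast_sub (show 1 ≤ n - l by omega), Nat.cast_sub (show l ≤ n by omega), Nat.cast_one]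
        ring

/-- eq. (19) of the paper. For `2 ≤ ℓ ≤ ⌊n/2⌋`,
`P[B_{n,ℓ}] ≤ (μ̃(ℓ−1)/(n−1) + (1−μ̃)((ℓ−1)/(n−1))^{K_r})^ℓ ·
(μ̃(n−ℓ−1)/(n−1) + (1−μ̃)((n−ℓ−1)/(n−1))^{K_r})^{n−ℓ}`. -/
theorem prob_B_n_ell_upper
    (r : ℕ) (hr : 2 ≤ r) (μ : Fin r → ℝ)
    (hμ : ∀ i, 0 < μ i) (hsum : ∑ i, μ i = 1)
    (lst : Fin r) (hlst : (lst : ℕ) = r - 1)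
    (μt : ℝ) (hμt : μt = ∑ i ∈ Finset.univ.erase lst, μ i)
    (n : ℕ) (hn : 2 ≤ n)
    (K : Fin r → ℕ) (hmono : Monotone K) (hone : ∀ i, 1 ≤ K i) (hlt : ∀ i, K i < n)
    (l : ℕ) (hl2 : 2 ≤ l) (hl : l ≤ n / 2) :
    Pr n μ K (Bevent n r l) ≤
      (μt * ((l : ℝ) - 1) / ((n : ℝ) - 1) +
          (1 - μt) * (((l : ℝ) - 1) / ((n : ℝ) - 1)) ^ (K lst)) ^ l *
        (μt * ((n : ℝ) - (l : ℝ) - 1) / ((n : ℝ) - 1) +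
          (1 - μt) * (((n : ℝ) - (l : ℝ) - 1) / ((n : ℝ) - 1)) ^ (K lst)) ^ (n - l) :=
  prob_B_n_ell_upper_general r μ hμ hsum lst μt hμt n K hone l hl2 hl
end
end

section
/- Let n ≥ 4 and ℓ, K_r be integers with 2 ≤ ℓ ≤ n/2, and let μ̃ ∈ (0, 1). If ℓ(K_r − 1)/n ≤ 1 and K_r ≥ 4·((1/2)^{K_r−1}/μ̃) + 1, then A_{n,ℓ} ≤ exp( −2(1−μ̃)·( (K_r−1)/4 − (1/2)^{K_r−1}/μ̃ ) ), where A_{n,ℓ} = exp( ((1−μ̃)/μ̃) ℓ (ℓ/n)^{K_r−1} − (1−μ̃)(n−ℓ)(1 − e^{−ℓ(K_r−1)/n}) ). -/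
/-- eq. (23)–(24) of the paper. If `ℓ(K_r − 1)/n ≤ 1` and
`K_r ≥ 4·((1/2)^{K_r−1}/μ̃) + 1`, then
`A_{n,ℓ} ≤ exp(−2(1−μ̃)((K_r−1)/4 − (1/2)^{K_r−1}/μ̃))`. -/
theorem A_bound_small_ell
    (n l Kr : ℕ) (hn : 4 ≤ n) (hl2 : 2 ≤ l) (hl : 2 * l ≤ n)
    (μt : ℝ) (hμt0 : 0 < μt) (hμt1 : μt < 1) (hKr : 1 ≤ Kr)
    (hsmall : (l : ℝ) * ((Kr : ℝ) - 1) / (n : ℝ) ≤ 1)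
    (hbig : (Kr : ℝ) ≥ 4 * ((1 / 2 : ℝ) ^ (Kr - 1) / μt) + 1) :
    Real.exp (((1 - μt) / μt) * (l : ℝ) * ((l : ℝ) / (n : ℝ)) ^ (Kr - 1) -
        (1 - μt) * ((n : ℝ) - (l : ℝ)) *
          (1 - Real.exp (-((l : ℝ) * ((Kr : ℝ) - 1)) / (n : ℝ)))) ≤
      Real.exp (-2 * (1 - μt) *
        (((Kr : ℝ) - 1) / 4 - (1 / 2 : ℝ) ^ (Kr - 1) / μt)) := by
  rw [Real.exp_le_exp]
  set m := Kr - 1 with hm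
  have hKr1 : (0:ℝ) ≤ (Kr:ℝ) - 1 := by
    have : (1:ℝ) ≤ Kr := by exact_mod_cast hKr
    linarith
  have hn0 : (0:ℝ) < n := by
    have : (4:ℝ) ≤ n := by exact_mod_cast hn
    linarith
  have hl0 : (0:ℝ) ≤ l := Nat.cast_nonneg l
  have hl2' : (2:ℝ) ≤ l := by exact_mod_cast hl2
  have hln : (l:ℝ)/n ≤ 1/2 := by
    rw [div_le_div_iff₀ hn0 (by norm_num)]
    have : (2:ℝ)*l ≤ n := by exact_mod_cast hl
    linarith
  have hPQ : ((l:ℝ)/n)^m ≤ (1/2:ℝ)^m := pow_le_pow_left₀ (by positivity) hln m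
  set x : ℝ := (l:ℝ)*((Kr:ℝ)-1)/n with hxdef
  have hx0 : 0 ≤ x := by positivity
  have hx1 : x ≤ 1 := hsmall
  have hE : Real.exp (-x) ≤ 1 - x/2 := by
    have h1 : x + 1 ≤ Real.exp x := Real.add_one_le_exp x
    have h2 : Real.exp (-x) * Real.exp x = 1 := by
      rw [← Real.exp_add]; simp
    have h3 : 0 < Real.exp (-x) := Real.exp_pos _
    nlinarith [mul_nonneg hx0 (sub_nonneg.2 hx1),
      mul_le_mul_of_nonneg_left h1 h3.le]
  have hnl : (n:ℝ)/2 ≤ (n:ℝ) - l := by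
    have : (2:ℝ)*l ≤ n := by exact_mod_cast hl
    linarith
  have hnegx : -((l:ℝ)*((Kr:ℝ)-1))/n = -x := by rw [hxdef, neg_div]
  have hterm2 : (l:ℝ)*((Kr:ℝ)-1)/4 ≤
      ((n:ℝ)-l)*(1 - Real.exp (-((l:ℝ)*((Kr:ℝ)-1))/n)) := by
    rw [hnegx]
    have hE' : x/2 ≤ 1 - Real.exp (-x) := by linarith
    have h1 : (n:ℝ)/2 * (x/2) ≤ ((n:ℝ)-l)*(1 - Real.exp (-x)) :=
      mul_le_mul hnl hE' (by positivity) (by linarith)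
    have h2 : (n:ℝ)/2 * (x/2) = (l:ℝ)*((Kr:ℝ)-1)/4 := by
      rw [hxdef]; field_simp; ring
    linarith
  have hμ1 : (0:ℝ) ≤ 1 - μt := by linarith
  have hterm1 : ((1-μt)/μt) * l * ((l:ℝ)/n)^m ≤ ((1-μt)/μt) * l * (1/2:ℝ)^m :=
    mul_le_mul_of_nonneg_left hPQ
      (mul_nonneg (div_nonneg hμ1 hμt0.le) hl0)
  have hc : (1/2:ℝ)^m / μt - ((Kr:ℝ)-1)/4 ≤ 0 := by linarith [hbig]
  have key : ((1-μt)/μt)*l*(1/2:ℝ)^m - (1-μt)*((l:ℝ)*((Kr:ℝ)-1)/4)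
      ≤ -2*(1-μt)*(((Kr:ℝ)-1)/4 - (1/2:ℝ)^m/μt) := by
    have e1 : ((1-μt)/μt)*(l:ℝ)*(1/2:ℝ)^m - (1-μt)*((l:ℝ)*((Kr:ℝ)-1)/4)
        = ((1-μt)*(l:ℝ))*((1/2:ℝ)^m/μt - ((Kr:ℝ)-1)/4) := by ring
    have e2 : -2*(1-μt)*(((Kr:ℝ)-1)/4 - (1/2:ℝ)^m/μt)
        = ((1-μt)*2)*((1/2:ℝ)^m/μt - ((Kr:ℝ)-1)/4) := by ring
    rw [e1, e2]
    have hab : (1-μt)*2 ≤ (1-μt)*(l:ℝ) :=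
      mul_le_mul_of_nonneg_left hl2' hμ1
    exact mul_le_mul_of_nonpos_right hab hc
  have hscale : (1-μt)*((l:ℝ)*((Kr:ℝ)-1)/4) ≤
      (1-μt)*(((n:ℝ)-l)*(1 - Real.exp (-((l:ℝ)*((Kr:ℝ)-1))/n))) :=
    mul_le_mul_of_nonneg_left hterm2 hμ1
  have hrw : (1-μt)*((n:ℝ)-l)*(1 - Real.exp (-((l:ℝ)*((Kr:ℝ)-1))/n))
      = (1-μt)*(((n:ℝ)-l)*(1 - Real.exp (-((l:ℝ)*((Kr:ℝ)-1))/n))) := by ring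
  linarith [hterm1, key, hscale]
end
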